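/- arXiv:1809.09577 — 6 statements merged into one kernel-verified Lean document; each statement's English description precedes it below -/
import Mathlib

section
/- For each integer k ≥ 2, the Maclaurin coefficients of h_k(z) = (1/(1-z))·log((1+z+...+z^{k-1})/k) are given by c_n(k) = H(n) - H(n/k) - log k, where H(x) = Σ_{1 ≤ j ≤ x} 1/j (sum over positive integers j ≤ x, with H(x)=0 for x<1). -/
/-- The harmonic sum H(x) = Σ_{1 ≤ j ≤ x} 1/j (zero for x < 1). -/
noncomputable def harmonicSum (x : ℝ) : ℝ := ∑ j ∈ Finset.Icc 1 ⌊x⌋₊, (1 : ℝ) / j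

private lemma stmt2_SB (k : ℕ) (hk : 2 ≤ k) (n : ℕ) :
    ∑ i ∈ Finset.range (n+1), (if k ∣ i then (k:ℝ)/i else 0)
      = ∑ m ∈ Finset.Icc 1 (n/k), (1:ℝ)/m := by
  induction n with
  | zero => simp [Nat.div_eq_of_lt (by omega : 0 < k)]
  | succ n ih =>
    rw [Finset.sum_range_succ, ih, Nat.succ_div]
    by_cases h : k ∣ (n+1)
    · rw [if_pos h, if_pos h]
      have h1 : (n+1)/k = n/k + 1 := by rw [Nat.succ_div, if_pos h]
      have h3 : (n+1 : ℕ) = k * ((n+1)/k) := (Nat.mul_div_cancel' h).symm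
      rw [h1] at h3
      rw [Finset.sum_Icc_succ_top (Nat.le_add_left 1 (n/k))]
      congr 1
      have hknR : ((n+1:ℕ):ℝ) = (k:ℝ)*(((n/k:ℕ):ℝ)+1) := by exact_mod_cast h3
      push_cast at hknR ⊢
      rw [hknR]
      have hx : ((n/k:ℕ):ℝ)+1 ≠ 0 := by positivity
      field_simp
    · rw [if_neg h, if_neg h, add_zero, add_zero]

private lemma stmt2_L1 (k : ℕ) (hk : 2 ≤ k) (n : ℕ) :
    ∑ i ∈ Finset.range (n+1),
      ((if i = 0 then -Real.log k else (1:ℝ)/i) - (if k ∣ i then (k:ℝ)/i else 0))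
    = harmonicSum n - harmonicSum ((n:ℝ)/k) - Real.log k := by
  rw [Finset.sum_sub_distrib, stmt2_SB k hk n]
  have hr : Finset.range (n+1) = insert 0 (Finset.Icc 1 n) := by
    ext i; simp [Nat.lt_succ_iff]; omega
  have hA : ∑ i ∈ Finset.range (n+1), (if i = 0 then -Real.log k else (1:ℝ)/i)
      = -Real.log k + ∑ i ∈ Finset.Icc 1 n, (1:ℝ)/i := by
    rw [hr, Finset.sum_insert (by simp), if_pos rfl]
    congr 1
    refine Finset.sum_congr rfl fun i hi => if_neg ?_
    simp only [Finset.mem_Icc] at hi; omega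
  rw [hA]
  have h1 : harmonicSum n = ∑ i ∈ Finset.Icc 1 n, (1:ℝ)/i := by
    simp [harmonicSum]
  have h2 : harmonicSum ((n:ℝ)/k) = ∑ m ∈ Finset.Icc 1 (n/k), (1:ℝ)/m := by
    unfold harmonicSum
    rw [show ((k:ℝ)) = ((k:ℕ):ℝ) by norm_cast, Nat.floor_div_natCast, Nat.floor_natCast]
  rw [h1, h2]; ring

/-- the Maclaurin coefficients of h_k are c_n(k) = H(n) - H(n/k) - log k. -/
theorem stmt2 (k : ℕ) (hk : 2 ≤ k) (z : ℂ) (hz : ‖z‖ < 1) :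
    HasSum (fun n : ℕ =>
        ((harmonicSum n - harmonicSum ((n : ℝ) / k) - Real.log k : ℝ) : ℂ) * z ^ n)
      ((1 - z)⁻¹ * Complex.log ((∑ i ∈ Finset.range k, z ^ i) / k)) := by
  -- setup
  have hzk : ‖z^k‖ < 1 := by
    rw [norm_pow]; exact pow_lt_one₀ (norm_nonneg z) hz (by omega)
  set b : ℕ → ℝ := fun i =>
    (if i = 0 then -Real.log k else (1:ℝ)/i) - (if k ∣ i then (k:ℝ)/i else 0) with hbdef
  -- series for the non-divisible part
  have hsum2 : HasSum (fun n : ℕ => if k ∣ n then (k:ℂ)/n * z^n else 0)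
      (-Complex.log (1 - z^k)) := by
    have h := Complex.hasSum_taylorSeries_neg_log hzk
    have hinj : Function.Injective (fun m : ℕ => k * m) := fun a b hab => by
      exact Nat.eq_of_mul_eq_mul_left (by omega) hab
    rw [← Function.Injective.hasSum_iff hinj ?_]
    · convert h using 1
      funext m
      have hd : k ∣ k * m := Dvd.intro m rfl
      simp only [Function.comp_apply, if_pos hd]
      rcases Nat.eq_zero_or_pos m with rfl | hm
      · simp
      · have hm0 : ((m:ℂ)) ≠ 0 := by exact_mod_cast hm.ne'
        have hk0 : ((k:ℂ)) ≠ 0 := by exact_mod_cast (by omega : k ≠ 0)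
        rw [← pow_mul]
        push_cast
        field_simp
    · intro n hn
      rw [if_neg]
      rintro ⟨c, rfl⟩
      exact hn ⟨c, rfl⟩
  -- series for the main part
  have hsum1 : HasSum (fun n : ℕ => (if n = 0 then -((Real.log k : ℝ):ℂ) else (1:ℂ)/n * z^n))
      (-Complex.log (1-z) + -((Real.log k : ℝ):ℂ)) := by
    have h := Complex.hasSum_taylorSeries_neg_log hz
    have h2 : HasSum (fun n : ℕ => if n = 0 then -((Real.log k:ℝ):ℂ) else 0)
        (-((Real.log k:ℝ):ℂ)) := hasSum_ite_eq 0 _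
    convert h.add h2 using 1
    funext n
    rcases n with _ | m
    · simp
    · simp only [Nat.succ_ne_zero, if_neg, reduceIte]
      rw [add_zero]; ring
  -- the coefficient series
  have hg : HasSum (fun n : ℕ => ((b n : ℝ):ℂ) * z^n)
      (-Complex.log (1-z) + -((Real.log k : ℝ):ℂ) - -Complex.log (1 - z^k)) := by
    have h := hsum1.sub hsum2
    convert h using 1
    · rfl
    funext n
    simp only [hbdef]
    push_cast
    rcases n with _ | m
    · have : ¬ ((0:ℂ))⁻¹ = 0 ∨ True := Or.inr trivial
      by_cases hd : k ∣ 0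
      · simp [hd]
      · simp [hd]
    · have hne : (m+1 : ℕ) ≠ 0 := Nat.succ_ne_zero m
      by_cases hd : k ∣ (m+1)
      · simp only [hne, if_neg, hd, if_pos, reduceIte]
        push_cast
        ring
      · simp only [hne, if_neg, hd, reduceIte]
        push_cast
        ring
  -- identify the sum of the coefficient series with the logarithm
  have hAre : 0 < ((1:ℂ) - z).re := by
    have h1 : z.re ≤ ‖z‖ := by
      exact Complex.re_le_norm z
    simp only [Complex.sub_re, Complex.one_re]
    linarith
  have hBre : 0 < ((1:ℂ) - z^k).re := by
    have h1 : (z^k).re ≤ ‖z^k‖ := by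
      exact Complex.re_le_norm _
    simp only [Complex.sub_re, Complex.one_re]
    linarith
  have hA0 : (1:ℂ) - z ≠ 0 := fun h => by simp [h] at hAre
  have hB0 : (1:ℂ) - z^k ≠ 0 := fun h => by simp [h] at hBre
  have hk0 : ((k:ℂ)) ≠ 0 := by exact_mod_cast (by omega : k ≠ 0)
  have hz1 : z ≠ 1 := by
    intro h; rw [h] at hz; simp at hz
  have hT : -Complex.log (1-z) + -((Real.log k : ℝ):ℂ) - -Complex.log (1 - z^k)
      = Complex.log ((∑ i ∈ Finset.range k, z ^ i) / k) := by
    have hargA : |Complex.arg (1 - z)| < Real.pi/2 :=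
      Complex.abs_arg_lt_pi_div_two_iff.mpr (Or.inl hAre)
    have hargB : |Complex.arg (1 - z^k)| < Real.pi/2 :=
      Complex.abs_arg_lt_pi_div_two_iff.mpr (Or.inl hBre)
    set w : ℂ := Complex.log (1 - z^k) - Complex.log (1 - z) - ((Real.log k : ℝ):ℂ) with hw
    have him : w.im = (1 - z^k).arg - (1 - z).arg := by
      simp [hw, Complex.sub_im, Complex.log_im]
    rw [abs_lt] at hargA hargB
    have him1 : -Real.pi < w.im := by rw [him]; linarith [Real.pi_pos]
    have him2 : w.im ≤ Real.pi := by rw [him]; linarith [Real.pi_pos]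
    have hexp : Complex.exp w = (∑ i ∈ Finset.range k, z ^ i) / k := by
      rw [hw, Complex.exp_sub, Complex.exp_sub, Complex.exp_log hB0, Complex.exp_log hA0]
      have hek : Complex.exp ((Real.log k : ℝ):ℂ) = (k:ℂ) := by
        rw [show ((Real.log (k:ℝ) : ℝ):ℂ) = Complex.log ((k:ℝ):ℂ) from
          Complex.ofReal_log (by positivity)]
        rw [show (((k:ℝ)):ℂ) = (k:ℂ) by push_cast; rfl]
        exact Complex.exp_log hk0
      rw [hek, geom_sum_eq hz1]
      have hC0 : z - 1 ≠ 0 := sub_ne_zero.mpr hz1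
      field_simp
      ring
    have hle := Complex.log_exp him1 him2
    rw [hexp] at hle
    rw [hle, hw]
    ring
  rw [hT] at hg
  -- geometric series
  have hgeo : HasSum (fun n : ℕ => z^n) (1-z)⁻¹ := hasSum_geometric_of_norm_lt_one hz
  -- summability of norms
  have hrsum : Summable (fun n : ℕ => ‖z‖^n) :=
    summable_geometric_of_lt_one (norm_nonneg z) hz
  have hfn : Summable (fun n : ℕ => ‖z^n‖) := by simpa [norm_pow] using hrsum
  have hlogk : (0:ℝ) ≤ Real.log k := Real.log_nonneg (by exact_mod_cast (by omega : 1 ≤ k))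
  have hbound : ∀ n : ℕ, |b n| ≤ Real.log k + (1 + k) := by
    intro n
    rcases n with _ | m
    · have hb0 : |b 0| = Real.log k := by
        simp [hbdef, abs_of_nonneg hlogk]
      rw [hb0]
      have : (0:ℝ) ≤ 1 + k := by positivity
      linarith
    · have hm1 : (1:ℝ) ≤ (m+1 : ℕ) := by exact_mod_cast Nat.one_le_iff_ne_zero.mpr (Nat.succ_ne_zero m)
      have hp : (0:ℝ) < ((m+1:ℕ):ℝ) := by linarith
      have e1 : |(if (m+1:ℕ) = 0 then -Real.log k else (1:ℝ)/(m+1:ℕ))| ≤ 1 := by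
        rw [if_neg (Nat.succ_ne_zero m)]
        rw [abs_of_nonneg (by positivity)]
        rw [div_le_one hp]; linarith
      have e2 : |(if k ∣ (m+1) then (k:ℝ)/(m+1:ℕ) else 0)| ≤ k := by
        by_cases hd : k ∣ (m+1)
        · rw [if_pos hd, abs_of_nonneg (by positivity), div_le_iff₀ hp]
          nlinarith [hm1, (Nat.cast_nonneg k : (0:ℝ) ≤ (k:ℝ))]
        · rw [if_neg hd, abs_zero]; positivity
      calc |b (m+1)| ≤ |(if (m+1:ℕ) = 0 then -Real.log k else (1:ℝ)/(m+1:ℕ))|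
            + |(if k ∣ (m+1) then (k:ℝ)/(m+1:ℕ) else 0)| := abs_sub _ _
        _ ≤ 1 + k := by linarith
        _ ≤ Real.log k + (1 + k) := by linarith
  have hgn : Summable (fun n : ℕ => ‖((b n : ℝ):ℂ) * z^n‖) := by
    refine Summable.of_nonneg_of_le (fun n => norm_nonneg _) (fun n => ?_)
      (hrsum.mul_left (Real.log k + (1 + k)))
    rw [norm_mul, norm_pow, Complex.norm_real, Real.norm_eq_abs]
    exact mul_le_mul_of_nonneg_right (hbound n) (pow_nonneg (norm_nonneg z) n)
  -- Cauchy product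
  have key := hasSum_sum_range_mul_of_summable_norm hfn hgn
  rw [hgeo.tsum_eq, hg.tsum_eq] at key
  convert key using 2 with n
  · rfl
  calc ((harmonicSum n - harmonicSum ((n : ℝ) / k) - Real.log k : ℝ) : ℂ) * z ^ n
      = ((∑ i ∈ Finset.range (n+1), b i : ℝ) : ℂ) * z ^ n := by
        rw [stmt2_L1 k hk n]
    _ = ∑ i ∈ Finset.range (n+1), ((b i : ℝ):ℂ) * z ^ n := by
        push_cast; rw [Finset.sum_mul]
    _ = ∑ j ∈ Finset.range (n+1), ((b (n - j) : ℝ):ℂ) * z ^ n := by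
        rw [← Finset.sum_range_reflect]
        exact Finset.sum_congr rfl fun j hj => by
          rw [show n + 1 - 1 - j = n - j from by omega]
    _ = ∑ j ∈ Finset.range (n+1), z ^ j * (((b (n - j) : ℝ):ℂ) * z ^ (n - j)) := by
        refine Finset.sum_congr rfl fun j hj => ?_
        have hj' : j ≤ n := Nat.lt_succ_iff.mp (Finset.mem_range.mp hj)
        rw [mul_comm (z^j), mul_assoc, ← pow_add,
          show n - j + j = n from by omega]
end

section
/- For all positive integers n and k, W_n h_k = h_{nk} - h_n, where h_k(z) = (1/(1-z))·(log(1-z^k) - log(1-z) - log k) for k ≥ 2, h_1 ≡ 0, and (W_n f)(z) = ((1-z^n)/(1-z))·f(z^n). -/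
/-- h_k(z) = (1/(1-z))·(log(1-z^k) - log(1-z) - log k); note h_1 ≡ 0. -/
noncomputable def hfun (k : ℕ) (z : ℂ) : ℂ :=
  (1 - z)⁻¹ * (Complex.log (1 - z ^ k) - Complex.log (1 - z) - Complex.log k)

/-- W_n h_k = h_{nk} - h_n on the open unit disk, where
    (W_n f)(z) = ((1-z^n)/(1-z))·f(z^n). -/
theorem stmt6 (n k : ℕ) (hn : 1 ≤ n) (hk : 1 ≤ k) (z : ℂ) (hz : ‖z‖ < 1) :
    ((1 - z ^ n) / (1 - z)) * hfun k (z ^ n) = hfun (n * k) z - hfun n z := by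
  have h1 : (1 : ℂ) - z ≠ 0 := by
    intro h
    have : z = 1 := by linear_combination -h
    simp [this] at hz
  have hzn : ‖z ^ n‖ < 1 := by
    rw [norm_pow]
    exact pow_lt_one₀ (norm_nonneg z) hz (by omega)
  have h2 : (1 : ℂ) - z ^ n ≠ 0 := by
    intro h
    have : z ^ n = 1 := by linear_combination -h
    simp [this] at hzn
  have hlog : Complex.log ((n * k : ℕ) : ℂ) = Complex.log n + Complex.log k := by
    have hn0 : (0:ℝ) < n := by exact_mod_cast Nat.pos_of_ne_zero (by omega)
    have hk0 : (0:ℝ) < k := by exact_mod_cast Nat.pos_of_ne_zero (by omega)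
    rw [show ((n * k : ℕ) : ℂ) = ((n * k : ℝ) : ℂ) by push_cast; ring,
      show ((n : ℕ) : ℂ) = ((n : ℝ) : ℂ) by push_cast; ring,
      show ((k : ℕ) : ℂ) = ((k : ℝ) : ℂ) by push_cast; ring,
      ← Complex.ofReal_log hn0.le, ← Complex.ofReal_log hk0.le,
      ← Complex.ofReal_log (by positivity), Real.log_mul hn0.ne' hk0.ne',
      Complex.ofReal_add]
  unfold hfun
  rw [← pow_mul, hlog]
  field_simp
  ring
end

section
/- The function 1 - z is a cyclic vector for the semigroup {T_n : n ≥ 1} on H²: if f ∈ H² is orthogonal to 1 - z^n for every n ≥ 1, then f = 0. Consequently the span of {1 - z^n : n ≥ 1} is dense in H². -/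
/-!
Orthogonality to every `1 - z^n` says that the Maclaurin coefficients of `f` are all equal to
`f 0`; square-summability forces them to tend to `0`, so `f = 0`. In the Hilbert space `ℓ²(ℕ, ℂ)`
a subspace with trivial orthogonal complement is dense, which gives the approximation statement.
-/

open Filter Topology
open scoped lp InnerProductSpace

theorem eq_zero_of_tendsto_zero_of_apply_zero_eq {E : Type*} [TopologicalSpace E] [T2Space E]
    [Zero E] {a : ℕ → E} (ha : Tendsto a atTop (𝓝 0)) (h : ∀ n, 1 ≤ n → a 0 = a n) : a = 0 := by
  have h0 : a 0 = 0 :=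
    tendsto_nhds_unique (tendsto_const_nhds.congr' ((eventually_ge_atTop 1).mono h)) ha
  funext n
  rcases n.eq_zero_or_pos with rfl | hn
  · exact h0
  · rw [Pi.zero_apply, ← h n hn, h0]

theorem tendsto_zero_of_summable_norm_sq {E : Type*} [SeminormedAddCommGroup E] {a : ℕ → E}
    (h : Summable fun n => ‖a n‖ ^ 2) : Tendsto a atTop (𝓝 0) := by
  rw [tendsto_zero_iff_norm_tendsto_zero]
  simpa [Function.comp_def, Real.sqrt_sq (norm_nonneg _)] using
    (Real.continuous_sqrt.tendsto 0).comp h.tendsto_atTop_zero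

namespace lp

variable {ι : Type*} {E : ι → Type*} [∀ i, NormedAddCommGroup (E i)]

theorem norm_sq_eq_tsum (f : lp E 2) : ‖f‖ ^ 2 = ∑' i, ‖f i‖ ^ 2 := by
  simpa using norm_rpow_eq_tsum (p := 2) (by norm_num) f

theorem summable_norm_sq (f : lp E 2) : Summable fun i => ‖f i‖ ^ 2 := by
  simpa using (hasSum_norm (p := 2) (by norm_num) f).summable

theorem memℓp_two_of_summable {f : ∀ i, E i} (hf : Summable fun i => ‖f i‖ ^ 2) : Memℓp f 2 :=
  (memℓp_gen_iff (by norm_num)).2 (by simpa using hf)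

end lp

/-- The coefficient sequence of `1 - z^n`; note that `oneSubXPow 0 = 0`. -/
noncomputable def oneSubXPow (n : ℕ) : ℓ²(ℕ, ℂ) := lp.single 2 0 1 - lp.single 2 n 1

theorem oneSubXPow_apply (n j : ℕ) :
    oneSubXPow n j = (if j = 0 then 1 else 0) - if j = n then 1 else 0 := by
  simp [oneSubXPow, lp.single_apply, Pi.single_apply]

theorem inner_oneSubXPow_left (n : ℕ) (f : ℓ²(ℕ, ℂ)) : ⟪oneSubXPow n, f⟫_ℂ = f 0 - f n := by
  simp [oneSubXPow, lp.inner_single_left]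

theorem orthogonal_span_range_oneSubXPow :
    (Submodule.span ℂ (Set.range oneSubXPow))ᗮ = ⊥ := by
  refine (Submodule.eq_bot_iff _).2 fun f hf => ?_
  have hconst (n : ℕ) (_ : 1 ≤ n) : f 0 = f n := by
    rw [← sub_eq_zero, ← inner_oneSubXPow_left]
    exact Submodule.inner_right_of_mem_orthogonal (Submodule.subset_span (Set.mem_range_self n)) hf
  exact lp.ext <| eq_zero_of_tendsto_zero_of_apply_zero_eq
    (tendsto_zero_of_summable_norm_sq (lp.summable_norm_sq f)) hconst

theorem topologicalClosure_span_range_oneSubXPow :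
    (Submodule.span ℂ (Set.range oneSubXPow)).topologicalClosure = ⊤ :=
  Submodule.topologicalClosure_eq_top_iff.2 orthogonal_span_range_oneSubXPow

theorem exists_norm_sub_sum_Icc_oneSubXPow_lt (f : ℓ²(ℕ, ℂ)) {ε : ℝ} (hε : 0 < ε) :
    ∃ (N : ℕ) (c : ℕ → ℂ), ‖f - ∑ n ∈ Finset.Icc 1 N, c n • oneSubXPow n‖ < ε := by
  have hf : f ∈ closure (Submodule.span ℂ (Set.range oneSubXPow) : Set ℓ²(ℕ, ℂ)) := by
    rw [← Submodule.topologicalClosure_coe, topologicalClosure_span_range_oneSubXPow]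
    trivial
  obtain ⟨g, hg, hfg⟩ := Metric.mem_closure_iff.1 hf ε hε
  obtain ⟨c, rfl⟩ := Finsupp.mem_span_range_iff_exists_finsupp.1 hg
  refine ⟨c.support.sup id, c, ?_⟩
  have hsupp : c.support ⊆ insert 0 (Finset.Icc 1 (c.support.sup id)) := fun n hn => by
    have : n ≤ c.support.sup id := Finset.le_sup (f := id) hn
    simp only [Finset.mem_insert, Finset.mem_Icc]
    omega
  rwa [Finsupp.sum_of_support_subset c hsupp (fun n a => a • oneSubXPow n)
      (fun _ _ => zero_smul _ _), Finset.sum_insert (by simp),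
    show oneSubXPow 0 = 0 from sub_self _, smul_zero, zero_add, dist_eq_norm] at hfg

/-- 1 - z is cyclic for {T_n} on H² (identified with ℓ² via Maclaurin
    coefficients): if f ⟂ (1 - z^n) for all n ≥ 1, i.e. the 0th and nth coefficients of f
    agree for all n ≥ 1, then f = 0; consequently the span of {1 - z^n : n ≥ 1} is dense. -/
theorem stmt10 :
    (∀ a : ℕ → ℂ, Summable (fun n : ℕ => ‖a n‖ ^ 2) → (∀ n : ℕ, 1 ≤ n → a 0 = a n) → a = 0) ∧
    ∀ a : ℕ → ℂ, Summable (fun n : ℕ => ‖a n‖ ^ 2) → ∀ ε : ℝ, 0 < ε →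
      ∃ (N : ℕ) (c : ℕ → ℂ), ∑' j : ℕ,
        ‖a j - ∑ n ∈ Finset.Icc 1 N,
          c n * ((if j = 0 then 1 else 0) - if j = n then 1 else 0)‖ ^ 2 < ε ^ 2 := by
  refine ⟨fun a ha => eq_zero_of_tendsto_zero_of_apply_zero_eq
    (tendsto_zero_of_summable_norm_sq ha), fun a ha ε hε => ?_⟩
  let f : ℓ²(ℕ, ℂ) := ⟨a, lp.memℓp_two_of_summable ha⟩
  obtain ⟨N, c, hlt⟩ := exists_norm_sub_sum_Icc_oneSubXPow_lt f hε
  refine ⟨N, c, ?_⟩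
  have hnorm := lp.norm_sq_eq_tsum (f - ∑ n ∈ Finset.Icc 1 N, c n • oneSubXPow n)
  simp only [lp.coeFn_sub, lp.coeFn_sum, lp.coeFn_smul, Pi.sub_apply, Finset.sum_apply,
    Pi.smul_apply, smul_eq_mul, oneSubXPow_apply] at hnorm
  rw [← hnorm]
  gcongr
end

section
/- For each positive integer n define φ_n(z) = Σ_{j=n+1}^∞ (z^j/j)·(Σ_{d|j, d ≤ n} μ(d)), where μ is the Möbius function. Then ‖φ_n‖_{H²} → 0 as n → ∞. -/
open ArithmeticFunction Filter

/-!
Bounding `|∑_{d ∣ j, d ≤ n} μ(d)|` by the number of divisors `d ≤ n` of `j` and expanding the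
square, the squared norm is at most `∑_{d,e ≤ n} ∑_{j > n, lcm(d,e) ∣ j} 1/j²`, and the inner
sum is at most `2 / (n lcm(d,e))`. Writing `g = gcd(d,e)`, the map `(d,e) ↦ (g, d/g, e/g)` is
injective with `lcm(d,e) = g · (d/g) · (e/g)`, so `∑_{d,e ≤ n} 1/lcm(d,e) ≤ H_n³ ≤ (1 + log n)³`.
Hence the squared norm is `O((log n)³ / n)`.
-/

open Finset Topology

lemma tsum_ite_lt_inv_sq_le (K : ℕ) :
    ∑' m : ℕ, (if K < m then ((m : ℝ) ^ 2)⁻¹ else 0) ≤ 2 / (K + 1) := by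
  refine Real.tsum_le_of_sum_range_le (fun m => by positivity) fun N => ?_
  have hfilter : (range N).filter (K < ·) = Ioo K N := by
    ext m; simp only [mem_filter, mem_range, mem_Ioo]; omega
  rw [← sum_filter, hfilter]
  exact_mod_cast sum_Ioo_inv_sq_le (α := ℝ) K N

noncomputable def invSqMultiplesAbove (n L j : ℕ) : ℝ :=
  if n < j ∧ L ∣ j then ((j : ℝ) ^ 2)⁻¹ else 0

lemma invSqMultiplesAbove_nonneg (n L j : ℕ) : 0 ≤ invSqMultiplesAbove n L j := by
  unfold invSqMultiplesAbove; positivity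

lemma summable_invSqMultiplesAbove (n L : ℕ) : Summable (invSqMultiplesAbove n L) :=
  (Real.summable_nat_pow_inv.mpr one_lt_two).of_nonneg_of_le (invSqMultiplesAbove_nonneg n L)
    fun j => by unfold invSqMultiplesAbove; split_ifs <;> first | exact le_rfl | positivity

lemma invSqMultiplesAbove_mul {n L : ℕ} (hL : 0 < L) (m : ℕ) :
    invSqMultiplesAbove n L (L * m) =
      ((L : ℝ) ^ 2)⁻¹ * if n / L < m then ((m : ℝ) ^ 2)⁻¹ else 0 := by
  have hlt : n < L * m ↔ n / L < m := by rw [Nat.div_lt_iff_lt_mul hL, mul_comm]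
  simp only [invSqMultiplesAbove, dvd_mul_right, and_true, hlt]
  split_ifs <;> simp [mul_pow, mul_comm]

lemma tsum_invSqMultiplesAbove_le {n L : ℕ} (hn : 0 < n) (hL : 0 < L) :
    ∑' j, invSqMultiplesAbove n L j ≤ 2 / (n * L) := by
  have hsupp : Function.support (invSqMultiplesAbove n L) ⊆ Set.range (L * ·) := by
    intro j hj
    by_contra hrange
    exact hj (if_neg fun h => hrange ⟨j / L, Nat.mul_div_cancel' h.2⟩)
  rw [← (mul_right_injective₀ hL.ne').tsum_eq hsupp]
  simp only [invSqMultiplesAbove_mul hL, tsum_mul_left]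
  have hn_lt : (n : ℝ) < L * (n / L + 1 : ℕ) := mod_cast Nat.lt_mul_div_succ n hL
  calc ((L : ℝ) ^ 2)⁻¹ * ∑' m : ℕ, (if n / L < m then ((m : ℝ) ^ 2)⁻¹ else 0)
      ≤ ((L : ℝ) ^ 2)⁻¹ * (2 / ((n / L : ℕ) + 1)) := by gcongr; exact tsum_ite_lt_inv_sq_le _
    _ ≤ 2 / (n * L) := by
      push_cast at hn_lt
      rw [← div_eq_inv_mul, div_div,
        div_le_div_iff_of_pos_left two_pos (by positivity) (by positivity)]
      nlinarith

lemma Nat.lcm_eq_gcd_mul_div_gcd_mul_div_gcd (d e : ℕ) :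
    d.lcm e = d.gcd e * (d / d.gcd e) * (e / d.gcd e) := by
  rw [Nat.mul_div_cancel' (Nat.gcd_dvd_left d e), Nat.lcm,
    Nat.mul_div_assoc _ (Nat.gcd_dvd_right d e)]

lemma sum_pow_three_eq_sum_product {ι R : Type*} [CommSemiring R] (s : Finset ι) (f : ι → R) :
    (∑ x ∈ s, f x) ^ 3 = ∑ q ∈ s ×ˢ s ×ˢ s, f q.1 * (f q.2.1 * f q.2.2) := by
  rw [pow_three, sum_product, sum_congr rfl fun x _ => sum_product _ _ _, sum_mul_sum]
  simp_rw [sum_mul_sum, mul_sum]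

lemma sum_sum_inv_lcm_le (n : ℕ) :
    ∑ d ∈ Icc 1 n, ∑ e ∈ Icc 1 n, ((d.lcm e : ℕ) : ℝ)⁻¹ ≤ (∑ g ∈ Icc 1 n, (g : ℝ)⁻¹) ^ 3 := by
  set τ : ℕ × ℕ → ℕ × ℕ × ℕ := fun p => (p.1.gcd p.2, p.1 / p.1.gcd p.2, p.2 / p.1.gcd p.2)
  set F : ℕ × ℕ × ℕ → ℝ := fun q => (q.1 : ℝ)⁻¹ * ((q.2.1 : ℝ)⁻¹ * (q.2.2 : ℝ)⁻¹)
  have hτ_inj : Set.InjOn τ ↑(Icc 1 n ×ˢ Icc 1 n) := by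
    rintro ⟨d, e⟩ - ⟨d', e'⟩ - h
    simp only [τ, Prod.mk.injEq] at h
    obtain ⟨hg, hd, he⟩ := h
    refine Prod.ext ?_ ?_ <;> dsimp only
    · rw [← Nat.mul_div_cancel' (Nat.gcd_dvd_left d e), hd, hg,
        Nat.mul_div_cancel' (Nat.gcd_dvd_left d' e')]
    · rw [← Nat.mul_div_cancel' (Nat.gcd_dvd_right d e), he, hg,
        Nat.mul_div_cancel' (Nat.gcd_dvd_right d' e')]
  have hτ_maps : ∀ p ∈ Icc 1 n ×ˢ Icc 1 n, τ p ∈ Icc 1 n ×ˢ Icc 1 n ×ˢ Icc 1 n := by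
    rintro ⟨d, e⟩ hp
    simp only [mem_product, mem_Icc] at hp ⊢
    have hg := Nat.gcd_pos_of_pos_left e hp.1.1
    refine ⟨⟨hg, (Nat.gcd_le_left e hp.1.1).trans hp.1.2⟩,
      ⟨?_, (Nat.div_le_self _ _).trans hp.1.2⟩, ?_, (Nat.div_le_self _ _).trans hp.2.2⟩
    · exact Nat.div_pos (Nat.gcd_le_left e hp.1.1) hg
    · exact Nat.div_pos (Nat.gcd_le_right d hp.2.1) hg
  calc ∑ d ∈ Icc 1 n, ∑ e ∈ Icc 1 n, ((d.lcm e : ℕ) : ℝ)⁻¹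
      = ∑ q ∈ (Icc 1 n ×ˢ Icc 1 n).image τ, F q := by
        rw [sum_image hτ_inj, sum_product]
        refine sum_congr rfl fun d _ => sum_congr rfl fun e _ => ?_
        rw [Nat.lcm_eq_gcd_mul_div_gcd_mul_div_gcd]
        push_cast
        rw [mul_inv, mul_inv, mul_assoc]
    _ ≤ ∑ q ∈ Icc 1 n ×ˢ Icc 1 n ×ˢ Icc 1 n, F q :=
        sum_le_sum_of_subset_of_nonneg (image_subset_iff.mpr hτ_maps) fun _ _ _ => by positivity
    _ = (∑ g ∈ Icc 1 n, (g : ℝ)⁻¹) ^ 3 :=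
        (sum_pow_three_eq_sum_product _ fun g : ℕ => (g : ℝ)⁻¹).symm

/-- For `j > n`, the `j`-th Taylor coefficient of `φ_n` is `truncatedMoebiusSum n j / j`. -/
noncomputable def truncatedMoebiusSum (n j : ℕ) : ℝ :=
  ∑ d ∈ j.divisors, if d ≤ n then (moebius d : ℝ) else 0

lemma abs_truncatedMoebiusSum_le {j : ℕ} (hj : j ≠ 0) (n : ℕ) :
    |truncatedMoebiusSum n j| ≤ #{d ∈ Icc 1 n | d ∣ j} := by
  have hfilter : {d ∈ j.divisors | d ≤ n} = {d ∈ Icc 1 n | d ∣ j} := by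
    ext d
    simp only [mem_filter, Nat.mem_divisors, mem_Icc]
    constructor
    · rintro ⟨⟨hdj, -⟩, hdn⟩
      exact ⟨⟨Nat.pos_of_dvd_of_pos hdj (Nat.pos_of_ne_zero hj), hdn⟩, hdj⟩
    · rintro ⟨⟨-, hdn⟩, hdj⟩
      exact ⟨⟨hdj, hj⟩, hdn⟩
  rw [truncatedMoebiusSum, ← sum_filter, hfilter]
  refine (abs_sum_le_sum_abs _ _).trans ?_
  simpa using sum_le_card_nsmul _ (fun d => |(moebius d : ℝ)|) 1 fun d _ => by
    exact_mod_cast abs_moebius_le_one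

lemma sq_card_filter_dvd (s : Finset ℕ) (j : ℕ) :
    (#{d ∈ s | d ∣ j} : ℝ) ^ 2 = ∑ d ∈ s, ∑ e ∈ s, if d.lcm e ∣ j then 1 else 0 := by
  simp only [card_filter, Nat.cast_sum, Nat.cast_ite, Nat.cast_one, Nat.cast_zero, sq, sum_mul_sum,
    ite_zero_mul_ite_zero, mul_one, Nat.lcm_dvd_iff]

lemma ite_truncatedMoebiusSum_sq_div_le (n j : ℕ) :
    (if n < j then truncatedMoebiusSum n j ^ 2 / (j : ℝ) ^ 2 else 0) ≤
      ∑ d ∈ Icc 1 n, ∑ e ∈ Icc 1 n, invSqMultiplesAbove n (d.lcm e) j := by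
  split_ifs with hj
  · have hsq : truncatedMoebiusSum n j ^ 2 ≤ (#{d ∈ Icc 1 n | d ∣ j} : ℝ) ^ 2 :=
      sq_le_sq.mpr ((abs_truncatedMoebiusSum_le (by omega) n).trans (le_abs_self _))
    calc truncatedMoebiusSum n j ^ 2 / (j : ℝ) ^ 2
        ≤ (#{d ∈ Icc 1 n | d ∣ j} : ℝ) ^ 2 / (j : ℝ) ^ 2 := by gcongr
      _ = _ := by
        simp_rw [sq_card_filter_dvd, sum_div, ite_div, zero_div, one_div, invSqMultiplesAbove,
          hj, true_and]
  · exact sum_nonneg fun d _ => sum_nonneg fun e _ => invSqMultiplesAbove_nonneg n _ j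

lemma tendsto_one_add_log_pow_div_atTop (k : ℕ) :
    Tendsto (fun x : ℝ => (1 + Real.log x) ^ k / x) atTop (𝓝 0) := by
  have hscaled := ((Real.tendsto_pow_log_div_mul_add_atTop 1 0 k one_ne_zero).comp
    (tendsto_id.const_mul_atTop (Real.exp_pos 1))).const_mul (Real.exp 1)
  rw [mul_zero] at hscaled
  refine hscaled.congr' ?_
  filter_upwards [eventually_gt_atTop 0] with x hx
  simp only [Function.comp, id, Real.log_mul (Real.exp_pos 1).ne' hx.ne', Real.log_exp]
  field_simp
  ring

lemma tsum_ite_truncatedMoebiusSum_sq_div_le {n : ℕ} (hn : 0 < n) :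
    ∑' j : ℕ, (if n < j then truncatedMoebiusSum n j ^ 2 / (j : ℝ) ^ 2 else 0) ≤
      2 / n * (1 + Real.log n) ^ 3 := by
  have hsummable (d e : ℕ) := summable_invSqMultiplesAbove n (d.lcm e)
  have hmajorant :
      Summable fun j => ∑ d ∈ Icc 1 n, ∑ e ∈ Icc 1 n, invSqMultiplesAbove n (d.lcm e) j :=
    summable_sum fun d _ => summable_sum fun e _ => hsummable d e
  have hharmonic : ∑ g ∈ Icc 1 n, (g : ℝ)⁻¹ ≤ 1 + Real.log n := by
    simpa [harmonic_eq_sum_Icc] using harmonic_le_one_add_log n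
  calc ∑' j : ℕ, (if n < j then truncatedMoebiusSum n j ^ 2 / (j : ℝ) ^ 2 else 0)
      ≤ ∑' j, ∑ d ∈ Icc 1 n, ∑ e ∈ Icc 1 n, invSqMultiplesAbove n (d.lcm e) j := by
        have hnonneg (j : ℕ) :
            0 ≤ if n < j then truncatedMoebiusSum n j ^ 2 / (j : ℝ) ^ 2 else 0 := by
          split_ifs <;> positivity
        exact Summable.tsum_le_tsum (ite_truncatedMoebiusSum_sq_div_le n)
          (hmajorant.of_nonneg_of_le hnonneg (ite_truncatedMoebiusSum_sq_div_le n)) hmajorant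
    _ = ∑ d ∈ Icc 1 n, ∑ e ∈ Icc 1 n, ∑' j, invSqMultiplesAbove n (d.lcm e) j := by
        rw [Summable.tsum_finsetSum fun d _ => summable_sum fun e _ => hsummable d e]
        exact sum_congr rfl fun d _ => Summable.tsum_finsetSum fun e _ => hsummable d e
    _ ≤ ∑ d ∈ Icc 1 n, ∑ e ∈ Icc 1 n, 2 / ((n : ℝ) * (d.lcm e : ℕ)) := by
        gcongr with d hd e he
        rw [mem_Icc] at hd he
        exact tsum_invSqMultiplesAbove_le hn (Nat.lcm_pos hd.1 he.1)
    _ = 2 / n * ∑ d ∈ Icc 1 n, ∑ e ∈ Icc 1 n, ((d.lcm e : ℕ) : ℝ)⁻¹ := by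
        simp_rw [mul_sum, div_mul_eq_div_div, div_eq_mul_inv (2 / (n : ℝ))]
    _ ≤ 2 / n * (1 + Real.log n) ^ 3 := by
        gcongr
        exact (sum_sum_inv_lcm_le n).trans (pow_le_pow_left₀ (by positivity) hharmonic 3)

/-- with φ_n(z) = Σ_{j>n} (z^j/j)·(Σ_{d|j, d≤n} μ(d)), the H² norm
    ‖φ_n‖ = √(Σ_{j>n} (Σ_{d|j, d≤n} μ(d))²/j²) tends to 0 as n → ∞. -/
theorem stmt11 :
    Tendsto (fun n : ℕ => Real.sqrt (∑' j : ℕ,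
        if n < j then
          (∑ d ∈ Nat.divisors j, if d ≤ n then (moebius d : ℝ) else 0) ^ 2 / (j : ℝ) ^ 2
        else 0))
      atTop (nhds 0) := by
  have hbound : ∀ᶠ n : ℕ in atTop,
      ∑' j : ℕ, (if n < j then truncatedMoebiusSum n j ^ 2 / (j : ℝ) ^ 2 else 0) ≤
        2 / n * (1 + Real.log n) ^ 3 :=
    (eventually_gt_atTop 0).mono fun n hn => tsum_ite_truncatedMoebiusSum_sq_div_le hn
  have hrate : Tendsto (fun n : ℕ => 2 / n * (1 + Real.log n) ^ 3) atTop (𝓝 0) := by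
    simpa [div_mul_eq_mul_div, mul_div_assoc] using
      ((tendsto_one_add_log_pow_div_atTop 3).comp tendsto_natCast_atTop_atTop).const_mul 2
  have hnormSq := squeeze_zero' (Eventually.of_forall fun n =>
    tsum_nonneg fun j => by split_ifs <;> positivity) hbound hrate
  simpa only [Real.sqrt_zero, truncatedMoebiusSum] using hnormSq.sqrt
end

section
/- The linear span of {h_k : k ≥ 2} is dense in H² with respect to the topology of uniform convergence on compact subsets of the unit disk, where h_k(z) = (1/(1-z))·log((1+z+...+z^{k-1})/k). -/
/-!
Put `L_k(z) = log ((1 + z + ⋯ + z ^ (k - 1)) / k) = (1 - z) h_k(z)` (`logAvgPow k`). It suffices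
to show that every function holomorphic on the disc is a locally uniform limit of linear
combinations of the `L_k`: apply this to `(1 - z) f` and divide by `1 - z`, which stays away from
`0` on compacts.

On the disc `L_k(z) = log (1 - z ^ k) - log (1 - z) - log k`. Dividing by `log k → ∞` gives the
constant `1` as a limit; then `L_k + log k → -log (1 - z)`, and hence every `-log (1 - z ^ m)` is a
limit. Möbius inversion of `-log (1 - w) = ∑ w ^ n / n` gives `w = ∑ μ(k) / k · (-log (1 - w ^ k))`,
uniformly convergent on smaller discs, so with `w = z ^ m` every monomial, hence every Taylor
polynomial, is a limit.
-/

open Complex Finset Filter Topology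
open scoped ArithmeticFunction.Moebius

namespace Submodule

/-- The closure of `S` for uniform convergence on compact subsets of the unit disc, which are
exactly the sets contained in some closed disc `‖z‖ ≤ r` with `r < 1`. -/
def discClosure (S : Submodule ℂ (ℂ → ℂ)) : Submodule ℂ (ℂ → ℂ) where
  carrier := {F | ∀ r ∈ Set.Ico (0 : ℝ) 1, ∀ ε > 0, ∃ G ∈ S, ∀ z : ℂ, ‖z‖ ≤ r → ‖F z - G z‖ ≤ ε}
  zero_mem' _ _ _ hε := ⟨0, S.zero_mem, fun z _ => by simpa using hε.le⟩
  add_mem' {F₁ F₂} h₁ h₂ r hr ε hε := by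
    obtain ⟨G₁, hG₁, h₁⟩ := h₁ r hr (ε / 2) (half_pos hε)
    obtain ⟨G₂, hG₂, h₂⟩ := h₂ r hr (ε / 2) (half_pos hε)
    refine ⟨G₁ + G₂, S.add_mem hG₁ hG₂, fun z hz => ?_⟩
    calc ‖(F₁ + F₂) z - (G₁ + G₂) z‖ = ‖(F₁ z - G₁ z) + (F₂ z - G₂ z)‖ := by
          simp only [Pi.add_apply]; ring_nf
      _ ≤ ε / 2 + ε / 2 := (norm_add_le _ _).trans (add_le_add (h₁ z hz) (h₂ z hz))
      _ = ε := add_halves ε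
  smul_mem' c F h r hr ε hε := by
    obtain ⟨G, hG, hFG⟩ := h r hr (ε / (‖c‖ + 1)) (by positivity)
    refine ⟨c • G, S.smul_mem c hG, fun z hz => ?_⟩
    calc ‖(c • F) z - (c • G) z‖ = ‖c‖ * ‖F z - G z‖ := by
          simp only [Pi.smul_apply, smul_eq_mul, ← mul_sub, norm_mul]
      _ ≤ (‖c‖ + 1) * (ε / (‖c‖ + 1)) :=
          mul_le_mul (le_add_of_nonneg_right zero_le_one) (hFG z hz) (norm_nonneg _)
            (by positivity)
      _ = ε := mul_div_cancel₀ _ (by positivity)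

variable {S : Submodule ℂ (ℂ → ℂ)} {F G : ℂ → ℂ}

theorem le_discClosure (S : Submodule ℂ (ℂ → ℂ)) : S ≤ S.discClosure :=
  fun F hF _ _ _ hε => ⟨F, hF, fun z _ => by simpa using hε.le⟩

theorem discClosure_discClosure (S : Submodule ℂ (ℂ → ℂ)) :
    S.discClosure.discClosure = S.discClosure := by
  refine le_antisymm (fun F hF r hr ε hε => ?_) (le_discClosure _)
  obtain ⟨G, hG, hFG⟩ := hF r hr (ε / 2) (half_pos hε)
  obtain ⟨H, hH, hGH⟩ := hG r hr (ε / 2) (half_pos hε)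
  refine ⟨H, hH, fun z hz => ?_⟩
  calc ‖F z - H z‖ = ‖(F z - G z) + (G z - H z)‖ := by ring_nf
    _ ≤ ε / 2 + ε / 2 := (norm_add_le _ _).trans (add_le_add (hFG z hz) (hGH z hz))
    _ = ε := add_halves ε

theorem mem_discClosure_of_eqOn (hF : F ∈ S.discClosure) (h : Set.EqOn F G (Metric.ball 0 1)) :
    G ∈ S.discClosure := by
  intro r hr ε hε
  obtain ⟨H, hH, hFH⟩ := hF r hr ε hε
  refine ⟨H, hH, fun z hz => ?_⟩
  rw [← h (mem_ball_zero_iff.mpr (hz.trans_lt hr.2))]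
  exact hFH z hz

end Submodule

theorem norm_pow_le_of_norm_le {R : Type*} [SeminormedRing R] {z : R} {r : ℝ} (hz : ‖z‖ ≤ r)
    (hr : r ≤ 1) {k : ℕ} (hk : k ≠ 0) : ‖z ^ k‖ ≤ r :=
  (norm_pow_le' z (Nat.pos_of_ne_zero hk)).trans
    ((pow_le_of_le_one (norm_nonneg z) (hz.trans hr) hk).trans hz)

theorem exists_norm_le_of_isCompact_subset_ball {K : Set ℂ} (hK : IsCompact K)
    (hKsub : K ⊆ Metric.ball 0 1) : ∃ r ∈ Set.Ico (0 : ℝ) 1, ∀ z ∈ K, ‖z‖ ≤ r := by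
  obtain ⟨r, hr, hKr⟩ := exists_lt_subset_ball hK.isClosed hKsub
  exact ⟨max r 0, ⟨le_max_right _ _, max_lt hr one_pos⟩,
    fun z hz => (mem_ball_zero_iff.mp (hKr hz)).le.trans (le_max_left _ _)⟩

namespace Complex

theorem re_one_sub_pos {w : ℂ} (hw : ‖w‖ < 1) : 0 < (1 - w).re := by
  simp only [sub_re, one_re]
  linarith [re_le_norm w]

theorem norm_log_one_sub_le {w : ℂ} {r : ℝ} (hw : ‖w‖ ≤ r) (hr : r < 1) :
    ‖log (1 - w)‖ ≤ r / (1 - r) := by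
  have hw1 : ‖w‖ < 1 := hw.trans_lt hr
  have := norm_log_sub_logTaylor_le 0 (z := -w) (by rwa [norm_neg])
  simp only [logTaylor, range_one, sum_singleton, Nat.cast_zero, div_zero, sub_zero, zero_add,
    pow_one, norm_neg, ← sub_eq_add_neg, div_one] at this
  calc ‖log (1 - w)‖ ≤ ‖w‖ * (1 - ‖w‖)⁻¹ := this
    _ ≤ r / (1 - r) := by rw [← div_eq_mul_inv]; gcongr; linarith [norm_nonneg w]

theorem norm_sub_inv_one_sub_mul_le {z a b : ℂ} {r : ℝ} (hz : ‖z‖ ≤ r) (hr : r < 1) :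
    ‖a - (1 - z)⁻¹ * b‖ ≤ ‖(1 - z) * a - b‖ / (1 - r) := by
  have h1z : 1 - r ≤ ‖1 - z‖ := by
    linarith [norm_one (α := ℂ) ▸ norm_sub_norm_le (1 : ℂ) z]
  have h1z0 : (1 : ℂ) - z ≠ 0 := norm_pos_iff.mp ((sub_pos.mpr hr).trans_le h1z)
  have e : a - (1 - z)⁻¹ * b = (1 - z)⁻¹ * ((1 - z) * a - b) := by
    rw [mul_sub, inv_mul_cancel_left₀ h1z0]
  rw [e, norm_mul, norm_inv, inv_mul_eq_div]
  exact div_le_div_of_nonneg_left (norm_nonneg _) (sub_pos.mpr hr) h1z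

end Complex

noncomputable def logAvgPow (k : ℕ) (z : ℂ) : ℂ := log ((∑ i ∈ range k, z ^ i) / k)

theorem logAvgPow_eq {k : ℕ} (hk : k ≠ 0) {z : ℂ} (hz : ‖z‖ < 1) :
    logAvgPow k z = log (1 - z ^ k) - log (1 - z) - log k := by
  have hre₁ := re_one_sub_pos (norm_pow_le_of_norm_le le_rfl hz.le hk |>.trans_lt hz)
  have hre₂ := re_one_sub_pos hz
  have hz1 : z ≠ 1 := by rintro rfl; simp at hz
  have harg₁ := abs_lt.mp (abs_arg_lt_pi_div_two_iff.mpr (Or.inl hre₁))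
  have harg₂ := abs_lt.mp (abs_arg_lt_pi_div_two_iff.mpr (Or.inl hre₂))
  have him : (log (1 - z ^ k) - log (1 - z) - log k).im = arg (1 - z ^ k) - arg (1 - z) := by
    simp [log_im]
  rw [logAvgPow, ← log_exp (x := log (1 - z ^ k) - log (1 - z) - log k)
    (by rw [him]; linarith) (by rw [him]; linarith)]
  congr 1
  rw [exp_sub, exp_sub, exp_log (ne_zero_of_re_pos hre₁), exp_log (ne_zero_of_re_pos hre₂),
    exp_log (Nat.cast_ne_zero.mpr hk), geom_sum_eq hz1]
  have : z - 1 ≠ 0 := sub_ne_zero.mpr hz1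
  field_simp
  ring

def logAvgPowSpan : Submodule ℂ (ℂ → ℂ) := Submodule.span ℂ (logAvgPow '' Set.Ici 2)

theorem logAvgPow_mem_discClosure_logAvgPowSpan {k : ℕ} (hk : k ≠ 0) :
    logAvgPow k ∈ logAvgPowSpan.discClosure := by
  obtain rfl | hk2 : k = 1 ∨ 2 ≤ k := by omega
  · convert logAvgPowSpan.discClosure.zero_mem
    funext z
    simp [logAvgPow]
  · exact Submodule.le_discClosure _ (Submodule.subset_span ⟨k, hk2, rfl⟩)

theorem one_mem_discClosure_logAvgPowSpan : (1 : ℂ → ℂ) ∈ logAvgPowSpan.discClosure := by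
  rw [← Submodule.discClosure_discClosure]
  rintro r ⟨-, hr⟩ ε hε
  have hlog : Tendsto (fun k : ℕ => 2 * (r / (1 - r)) / Real.log k) atTop (𝓝 0) :=
    tendsto_const_nhds.div_atTop (Real.tendsto_log_atTop.comp tendsto_natCast_atTop_atTop)
  obtain ⟨k, hkε, hk2⟩ := ((hlog.eventually (ge_mem_nhds hε)).and (eventually_ge_atTop 2)).exists
  have hk0 : k ≠ 0 := by omega
  have hlogk : 0 < Real.log k := Real.log_pos (by exact_mod_cast hk2)
  refine ⟨-(log k)⁻¹ • logAvgPow k,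
    Submodule.smul_mem _ _ (logAvgPow_mem_discClosure_logAvgPowSpan hk0), fun z hz => ?_⟩
  have hk : (log k : ℂ) ≠ 0 := by rw [← natCast_log]; exact_mod_cast hlogk.ne'
  have e : (1 : ℂ → ℂ) z - (-(log k)⁻¹ • logAvgPow k) z
      = (log (1 - z ^ k) - log (1 - z)) / log k := by
    simp only [Pi.one_apply, Pi.smul_apply, smul_eq_mul, logAvgPow_eq hk0 (hz.trans_lt hr)]
    field_simp
    ring
  rw [e, norm_div, ← natCast_log, norm_real, Real.norm_of_nonneg hlogk.le]
  calc _ ≤ 2 * (r / (1 - r)) / Real.log k := by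
        gcongr
        refine (norm_sub_le _ _).trans ?_
        linarith [norm_log_one_sub_le (norm_pow_le_of_norm_le hz hr.le hk0) hr,
          norm_log_one_sub_le hz hr]
    _ ≤ ε := hkε

theorem neg_log_one_sub_mem_discClosure_logAvgPowSpan :
    (fun z => -log (1 - z)) ∈ logAvgPowSpan.discClosure := by
  rw [← Submodule.discClosure_discClosure]
  rintro r ⟨hr0, hr⟩ ε hε
  have hpow : Tendsto (fun k : ℕ => r ^ k / (1 - r)) atTop (𝓝 0) := by
    simpa using (tendsto_pow_atTop_nhds_zero_of_lt_one hr0 hr).div_const (1 - r)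
  obtain ⟨k, hkε, hk1⟩ := ((hpow.eventually (ge_mem_nhds hε)).and (eventually_ge_atTop 1)).exists
  have hk0 : k ≠ 0 := by omega
  refine ⟨logAvgPow k + log k • 1,
    Submodule.add_mem _ (logAvgPow_mem_discClosure_logAvgPowSpan hk0)
      (Submodule.smul_mem _ _ one_mem_discClosure_logAvgPowSpan), fun z hz => ?_⟩
  have hzk : ‖z ^ k‖ ≤ r ^ k := by rw [norm_pow]; exact pow_le_pow_left₀ (norm_nonneg z) hz k
  simp only [Pi.add_apply, Pi.smul_apply, Pi.one_apply, smul_eq_mul, mul_one,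
    logAvgPow_eq hk0 (hz.trans_lt hr)]
  calc ‖-log (1 - z) - (log (1 - z ^ k) - log (1 - z) - log k + log k)‖
      = ‖log (1 - z ^ k)‖ := by rw [← norm_neg]; ring_nf
    _ ≤ r ^ k / (1 - r ^ k) := norm_log_one_sub_le hzk (pow_lt_one₀ hr0 hr hk0)
    _ ≤ r ^ k / (1 - r) := by
        gcongr
        exact pow_le_of_le_one hr0 hr.le hk0
    _ ≤ ε := hkε

theorem neg_log_one_sub_pow_mem_discClosure_logAvgPowSpan {m : ℕ} (hm : m ≠ 0) :
    (fun z => -log (1 - z ^ m)) ∈ logAvgPowSpan.discClosure := by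
  refine Submodule.mem_discClosure_of_eqOn
    (F := (fun z => -log (1 - z)) - logAvgPow m - log m • 1)
    (Submodule.sub_mem _ (Submodule.sub_mem _ neg_log_one_sub_mem_discClosure_logAvgPowSpan
      (logAvgPow_mem_discClosure_logAvgPowSpan hm))
      (Submodule.smul_mem _ _ one_mem_discClosure_logAvgPowSpan))
    fun z hz => ?_
  simp only [Pi.sub_apply, Pi.smul_apply, Pi.one_apply, smul_eq_mul, mul_one,
    logAvgPow_eq hm (mem_ball_zero_iff.mp hz)]
  ring

open ArithmeticFunction in
theorem sum_divisorsAntidiagonal_moebius (n : ℕ) :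
    ∑ x ∈ n.divisorsAntidiagonal, (μ x.1 : ℂ) = if n = 1 then 1 else 0 := by
  have h := congrArg (· n) (coe_moebius_mul_coe_zeta (R := ℂ))
  simp only [mul_apply, one_apply] at h
  rw [← h]
  refine Finset.sum_congr rfl fun x hx => ?_
  simp [(Nat.pos_of_mem_divisors (Nat.snd_mem_divisors_of_mem_antidiagonal hx)).ne']

theorem sum_divisorsAntidiagonal_moebius_div_mul_pow (n : ℕ) (w : ℂ) :
    ∑ x ∈ n.divisorsAntidiagonal, (μ x.1 : ℂ) / (x.1 * x.2 : ℕ) * w ^ (x.1 * x.2)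
      = if n = 1 then w else 0 := by
  rw [Finset.sum_congr rfl fun x hx => by rw [(Nat.mem_divisorsAntidiagonal.mp hx).1],
    ← Finset.sum_mul, ← Finset.sum_div, sum_divisorsAntidiagonal_moebius]
  split_ifs with h <;> simp [h]

theorem norm_moebius_div_natCast_le_one (k n : ℕ) : ‖(μ k : ℂ) / n‖ ≤ 1 := by
  rcases eq_or_ne n 0 with rfl | hn
  · simp
  rw [norm_div, Complex.norm_natCast, Complex.norm_intCast,
    div_le_one (Nat.cast_pos.mpr (Nat.pos_of_ne_zero hn))]
  calc |(μ k : ℝ)| ≤ 1 := by exact_mod_cast ArithmeticFunction.abs_moebius_le_one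
    _ ≤ n := Nat.one_le_cast.mpr (Nat.one_le_iff_ne_zero.mpr hn)

theorem eq_zero_of_notMem_range_pnatVal {n : ℕ} (hn : n ∉ Set.range PNat.val) : n = 0 := by
  by_contra h
  exact hn ⟨⟨n, Nat.pos_of_ne_zero h⟩, rfl⟩

/-- Summing `μ(k) / (k n) · w ^ (k n)` over `k, n ≥ 1` row by row gives the left side, and
fibrewise over `k n = j` gives `w` since `∑_{k ∣ j} μ(k) = [j = 1]`. -/
theorem hasSum_moebius_div_mul_neg_log_one_sub_pow {w : ℂ} (hw : ‖w‖ < 1) :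
    HasSum (fun k : ℕ => (μ k : ℂ) / k * -log (1 - w ^ k)) w := by
  set g : ℕ+ × ℕ+ → ℂ := fun c => (μ c.1 : ℂ) / (c.1 * c.2 : ℕ) * w ^ (c.1 * c.2 : ℕ)
  have hg : Summable g := by
    refine Summable.of_norm_bounded
      (summable_prod_mul_pow 0 (r := ‖w‖) (by simpa using hw)) fun c => ?_
    simp only [g, norm_mul, norm_pow, pow_zero, one_mul]
    exact mul_le_of_le_one_left (by positivity) (norm_moebius_div_natCast_le_one _ _)
  have hrow (k : ℕ+) :
      HasSum (fun n => g (k, n)) ((μ k : ℂ) / k * -log (1 - w ^ (k : ℕ))) := by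
    have hwk : ‖w ^ (k : ℕ)‖ < 1 := norm_pow_le_of_norm_le le_rfl hw.le k.ne_zero |>.trans_lt hw
    refine (((PNat.coe_injective.hasSum_iff fun n hn => by
      simp [eq_zero_of_notMem_range_pnatVal hn]).mpr
      (hasSum_taylorSeries_neg_log hwk)).mul_left ((μ k : ℂ) / k)).congr_fun fun n => ?_
    simp only [g, Function.comp_apply, Nat.cast_mul, ← pow_mul]
    field_simp
  have hfib (n : ℕ+) : HasSum (fun x => (g ∘ sigmaAntidiagonalEquivProd) ⟨n, x⟩)
      (if n = 1 then w else 0) := by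
    convert hasSum_fintype _
    change _ = ∑ x : (n : ℕ).divisorsAntidiagonal,
      (fun x : ℕ × ℕ => (μ x.1 : ℂ) / (x.1 * x.2 : ℕ) * w ^ (x.1 * x.2)) x.1
    rw [Finset.univ_eq_attach, Finset.sum_attach _
        (fun x : ℕ × ℕ => (μ x.1 : ℂ) / (x.1 * x.2 : ℕ) * w ^ (x.1 * x.2)),
      sum_divisorsAntidiagonal_moebius_div_mul_pow]
    simp
  have hsum : HasSum g w := by
    have hs := (sigmaAntidiagonalEquivProd.summable_iff.mpr hg).hasSum
    rw [(hasSum_ite_eq 1 w).unique (hs.sigma hfib)]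
    exact sigmaAntidiagonalEquivProd.hasSum_iff.mp hs
  refine (PNat.coe_injective.hasSum_iff fun k hk => ?_).mp (hsum.prod_fiberwise hrow)
  simp [eq_zero_of_notMem_range_pnatVal hk]

theorem norm_moebius_div_mul_neg_log_one_sub_pow_le {w : ℂ} {r : ℝ} (hw : ‖w‖ ≤ r)
    (hr0 : 0 ≤ r) (hr : r < 1) (k : ℕ) :
    ‖(μ k : ℂ) / k * -log (1 - w ^ k)‖ ≤ (1 - r)⁻¹ * r ^ k := by
  rcases eq_or_ne k 0 with rfl | hk
  · simpa using hr.le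
  have hwk : ‖w ^ k‖ ≤ r ^ k := by rw [norm_pow]; exact pow_le_pow_left₀ (norm_nonneg _) hw k
  calc _ ≤ 1 * (r ^ k / (1 - r ^ k)) := by
        rw [norm_mul, norm_neg]
        exact mul_le_mul (norm_moebius_div_natCast_le_one k k)
          (norm_log_one_sub_le hwk (pow_lt_one₀ hr0 hr hk)) (norm_nonneg _) zero_le_one
    _ ≤ (1 - r)⁻¹ * r ^ k := by
        rw [one_mul, div_eq_mul_inv, mul_comm]
        gcongr
        exact pow_le_of_le_one hr0 hr.le hk

theorem pow_mem_discClosure_logAvgPowSpan (m : ℕ) :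
    (fun z : ℂ => z ^ m) ∈ logAvgPowSpan.discClosure := by
  rcases eq_or_ne m 0 with rfl | hm
  · simp only [pow_zero]
    exact one_mem_discClosure_logAvgPowSpan
  rw [← Submodule.discClosure_discClosure]
  rintro r ⟨hr0, hr⟩ ε hε
  have hpow : Tendsto (fun K : ℕ => (1 - r)⁻¹ * r ^ K / (1 - r)) atTop (𝓝 0) := by
    simpa using ((tendsto_pow_atTop_nhds_zero_of_lt_one hr0 hr).const_mul (1 - r)⁻¹).div_const
      (1 - r)
  obtain ⟨K, hK⟩ := (hpow.eventually (ge_mem_nhds hε)).exists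
  refine ⟨∑ k ∈ range K, ((μ k : ℂ) / k) • fun z => -log (1 - z ^ (m * k)),
    Submodule.sum_mem _ fun k _ => ?_, fun z hz => ?_⟩
  · rcases eq_or_ne k 0 with rfl | hk
    · simp
    · exact Submodule.smul_mem _ _
        (neg_log_one_sub_pow_mem_discClosure_logAvgPowSpan (mul_ne_zero hm hk))
  have hzm : ‖z ^ m‖ ≤ r := norm_pow_le_of_norm_le hz hr.le hm
  have := norm_sub_le_of_geometric_bound_of_hasSum hr
    (norm_moebius_div_mul_neg_log_one_sub_pow_le hzm hr0 hr)
    (hasSum_moebius_div_mul_neg_log_one_sub_pow (hzm.trans_lt hr)) K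
  rw [norm_sub_rev] at this
  simpa [Finset.sum_apply, pow_mul] using this.trans hK

theorem mem_discClosure_logAvgPowSpan_of_differentiableOn {f : ℂ → ℂ}
    (hf : DifferentiableOn ℂ f (Metric.ball 0 1)) : f ∈ logAvgPowSpan.discClosure := by
  rw [← Submodule.discClosure_discClosure]
  rintro r ⟨hr0, hr⟩ ε hε
  lift r to NNReal using hr0
  obtain ⟨R', hrR', hR'1⟩ := exists_between (show r < 1 by exact_mod_cast hr)
  obtain ⟨R, hR'R, hR1⟩ := exists_between hR'1
  have hps := DifferentiableOn.hasFPowerSeriesOnBall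
    (hf.mono (Metric.closedBall_subset_ball (by exact_mod_cast hR1))) (pos_of_gt hR'R)
  set p := cauchyPowerSeries f 0 R
  obtain ⟨n, hn⟩ := (Metric.tendstoUniformlyOn_iff.mp
    (hps.tendstoUniformlyOn (r' := R') (by exact_mod_cast hR'R)) ε hε).exists
  have hpoly : (fun z => p.partialSum n z) = ∑ i ∈ range n, p.coeff i • fun z : ℂ => z ^ i := by
    funext z
    simp [FormalMultilinearSeries.partialSum, Finset.sum_apply, mul_comm]
  refine ⟨fun z => p.partialSum n z, hpoly ▸ Submodule.sum_mem _ fun i _ =>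
    Submodule.smul_mem _ _ (pow_mem_discClosure_logAvgPowSpan i), fun z hz => ?_⟩
  have := hn z (mem_ball_zero_iff.mpr (hz.trans_lt (by exact_mod_cast hrR')))
  rw [zero_add, dist_eq_norm] at this
  exact this.le

theorem exists_eq_sum_Icc_of_mem_logAvgPowSpan {G : ℂ → ℂ} (hG : G ∈ logAvgPowSpan) :
    ∃ (N : ℕ) (c : ℕ → ℂ), ∀ z, G z = ∑ k ∈ Icc 2 N, c k * logAvgPow k z := by
  obtain ⟨l, hl, rfl⟩ := (Finsupp.mem_span_image_iff_linearCombination ℂ).mp hG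
  refine ⟨l.support.sup id, l, fun z => ?_⟩
  rw [Finsupp.linearCombination_apply, Finsupp.sum, Finset.sum_apply]
  exact Finset.sum_subset (fun k hk => mem_Icc.mpr ⟨hl hk, le_sup (f := id) hk⟩)
    (fun k _ hk => by simp [Finsupp.notMem_support_iff.mp hk])

theorem stmt18_general (f : ℂ → ℂ) (hf : DifferentiableOn ℂ f (Metric.ball (0 : ℂ) 1))
    (K : Set ℂ) (hK : IsCompact K) (hKsub : K ⊆ Metric.ball (0 : ℂ) 1)
    (ε : ℝ) (hε : 0 < ε) :
    ∃ (N : ℕ) (c : ℕ → ℂ), ∀ z ∈ K,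
      ‖f z - ∑ k ∈ Finset.Icc 2 N,
          c k * ((1 - z)⁻¹ * Complex.log ((∑ i ∈ Finset.range k, z ^ i) / k))‖ < ε := by
  obtain ⟨r, hr, hKr⟩ := exists_norm_le_of_isCompact_subset_ball hK hKsub
  have hr1 : 0 < 1 - r := sub_pos.mpr hr.2
  have hg : (fun z => (1 - z) * f z) ∈ logAvgPowSpan.discClosure :=
    mem_discClosure_logAvgPowSpan_of_differentiableOn
      (((differentiableOn_const 1).sub differentiableOn_id).mul hf)
  obtain ⟨G, hG, hgG⟩ := hg r hr (ε * (1 - r) / 2) (by positivity)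
  obtain ⟨N, c, hc⟩ := exists_eq_sum_Icc_of_mem_logAvgPowSpan hG
  refine ⟨N, c, fun z hz => ?_⟩
  show ‖f z - ∑ k ∈ Icc 2 N, c k * ((1 - z)⁻¹ * logAvgPow k z)‖ < ε
  simp_rw [mul_left_comm (c _), ← mul_sum, ← hc]
  calc _ ≤ ‖(1 - z) * f z - G z‖ / (1 - r) := norm_sub_inv_one_sub_mul_le (hKr z hz) hr.2
    _ ≤ ε * (1 - r) / 2 / (1 - r) := by gcongr; exact hgG z (hKr z hz)
    _ = ε / 2 := by field_simp
    _ < ε := half_lt_self hε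

/-- the span of {h_k : k ≥ 2}, h_k(z) = (1/(1-z))·log((1+z+...+z^{k-1})/k),
    is dense in H² for the topology of uniform convergence on compact subsets of 𝔻. -/
theorem stmt18 (f : ℂ → ℂ) (hf : DifferentiableOn ℂ f (Metric.ball (0 : ℂ) 1))
    (hf2 : Summable fun n : ℕ => ‖iteratedDeriv n f 0 / (n.factorial : ℂ)‖ ^ 2)
    (K : Set ℂ) (hK : IsCompact K) (hKsub : K ⊆ Metric.ball (0 : ℂ) 1)
    (ε : ℝ) (hε : 0 < ε) :
    ∃ (N : ℕ) (c : ℕ → ℂ), ∀ z ∈ K,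
      ‖f z - ∑ k ∈ Finset.Icc 2 N,
          c k * ((1 - z)⁻¹ * Complex.log ((∑ i ∈ Finset.range k, z ^ i) / k))‖ < ε :=
  stmt18_general f hf K hK hKsub ε hε
end

section
/- The function L(z) = log(1-z) = -Σ_{k≥1} z^k/k is a cyclic vector for the semigroup {T_n : n ≥ 1} acting on H²_0 = {f ∈ H² : f(0) = 0}, i.e., the span of {log(1-z^n) : n ≥ 1} is dense in H²_0. -/
/-!
Write `f = ∑ aⱼ zʲ`. Since `log (1 - zⁿ) = -∑ᵢ zⁿⁱ / i`, Möbius inversion over the divisors of `Q`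
gives `-∑_{m ∣ Q} μ(m)/m · log (1 - z^{mk}) = ∑_{t coprime to Q} z^{kt} / t`. For `Q = P#` every
`t > 1` coprime to `Q` exceeds `P`, so this combination is `zᵏ` plus terms `zʲ`, `j > P`, with
coefficients at most `k / j`. Replacing each `zᵏ`, `k ≤ K`, of the truncation of `f` by it leaves an
error of squared `H²` norm at most `2 ∑_{j>K} |aⱼ|² + 2 (∑_{k≤K} k |aₖ|)² ∑_{j>P} 1/j²`, which is
small once `K` and then `P` are large.
-/

open Filter Finset
open scoped ArithmeticFunction.Moebius

lemma iteratedDeriv_div_factorial_eq_of_hasSum {𝕜 : Type*} [RCLike 𝕜] {g : 𝕜 → 𝕜} {B : ℕ → 𝕜}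
    {r : ℝ} (hr : 0 < r) (hg : ∀ z : 𝕜, ‖z‖ < r → HasSum (fun j => B j * z ^ j) (g z)) (j : ℕ) :
    iteratedDeriv j g 0 / j.factorial = B j := by
  set p := FormalMultilinearSeries.ofScalars 𝕜 B
  have hrad : ENNReal.ofReal r ≤ p.radius := by
    refine ENNReal.le_of_forall_nnreal_lt fun ρ hρ => p.le_radius_of_tendsto (l := 0) ?_
    have hρr : (ρ : ℝ) < r := by
      rwa [← ENNReal.ofReal_coe_nnreal, ENNReal.ofReal_lt_ofReal_iff hr] at hρ
    have h := (hg ((ρ : ℝ) : 𝕜) (by simpa using hρr)).summable.tendsto_atTop_zero.norm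
    simpa [p, FormalMultilinearSeries.ofScalars_norm] using h
  have hp : HasFPowerSeriesOnBall g p 0 (ENNReal.ofReal r) := by
    refine ⟨hrad, ENNReal.ofReal_pos.mpr hr, fun {y} hy => ?_⟩
    have hy' : ‖y‖ < r := by
      simpa [edist_zero_right, ← ofReal_norm, ENNReal.ofReal_lt_ofReal_iff hr] using hy
    simpa [p, FormalMultilinearSeries.ofScalars_apply_eq, mul_comm] using hg y hy'
  have h := hp.hasFPowerSeriesAt.eq_formalMultilinearSeries hp.analyticAt.hasFPowerSeriesAt
  exact (congrFun ((FormalMultilinearSeries.ofScalars_series_eq_iff 𝕜 _ _).mp h) j).symm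

lemma tendsto_tsum_ite_lt_atTop_zero {G : Type*} [AddCommGroup G] [TopologicalSpace G]
    [IsTopologicalAddGroup G] [T2Space G] (f : ℕ → G) :
    Tendsto (fun K => ∑' j, if K < j then f j else 0) atTop (nhds 0) := by
  refine ((tendsto_sum_nat_add f).comp (tendsto_add_atTop_nat 1)).congr fun K => ?_
  have hsupp : (Function.support fun j => if K < j then f j else 0) ⊆
      Set.range (· + (K + 1)) := fun j hj =>
    ⟨j - (K + 1), by grind [Function.mem_support]⟩
  rw [← (add_left_injective (K + 1)).tsum_eq hsupp]
  exact tsum_congr fun i => (if_pos (by omega)).symm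

lemma exists_sum_mul_eq_sum_mul_comp {ι κ R : Type*} [CommSemiring R] [DecidableEq κ]
    {s : Finset ι} {t : Finset κ} (w : ι → R) {g : ι → κ} (hg : ∀ i ∈ s, g i ∈ t) :
    ∃ c : κ → R, ∀ F : κ → R, ∑ n ∈ t, c n * F n = ∑ i ∈ s, w i * F (g i) := by
  refine ⟨fun n => ∑ i ∈ s with g i = n, w i, fun F => ?_⟩
  rw [← sum_fiberwise_of_maps_to hg]
  refine sum_congr rfl fun n _ => ?_
  rw [sum_mul]
  exact sum_congr rfl fun i hi => by rw [(mem_filter.mp hi).2]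

-- At `j = 0` the junk value `n / 0 = 0` is the correct coefficient.
noncomputable def logCoeff (n j : ℕ) : ℂ := if n ∣ j then -(n / j : ℂ) else 0

lemma hasSum_logCoeff {n : ℕ} (hn : n ≠ 0) {z : ℂ} (hz : ‖z‖ < 1) :
    HasSum (fun j => logCoeff n j * z ^ j) (Complex.log (1 - z ^ n)) := by
  have hzn : ‖z ^ n‖ < 1 := by rw [norm_pow]; exact pow_lt_one₀ (norm_nonneg z) hz hn
  have h := (Complex.hasSum_taylorSeries_neg_log hzn).neg
  rw [neg_neg] at h
  have hcomp : (fun j => logCoeff n j * z ^ j) ∘ (n * ·) = fun i : ℕ => -((z ^ n) ^ i / i) := by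
    funext i
    have : (n : ℂ) ≠ 0 := by exact_mod_cast hn
    rw [Function.comp_apply, logCoeff, if_pos (dvd_mul_right n i), pow_mul, Nat.cast_mul]
    rcases eq_or_ne i 0 with rfl | hi
    · simp
    · field_simp
  refine ((mul_right_injective₀ hn).hasSum_iff fun j hj => ?_).mp (hcomp ▸ h)
  have : ¬ n ∣ j := fun ⟨i, hi⟩ => hj ⟨i, hi.symm⟩
  simp [logCoeff, this]

lemma sum_moebius_divisors_filter_dvd {R : Type*} [Ring R] {Q : ℕ} (hQ : Q ≠ 0) (t : ℕ) :
    ∑ m ∈ Q.divisors with m ∣ t, (μ m : R) = if Nat.Coprime Q t then 1 else 0 := by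
  have hdiv : {m ∈ Q.divisors | m ∣ t} = (Q.gcd t).divisors := by
    ext m
    simp [Nat.dvd_gcd_iff, hQ]
  have h := ArithmeticFunction.coe_mul_zeta_apply (R := R) (f := μ) (x := Q.gcd t)
  rw [ArithmeticFunction.coe_moebius_mul_coe_zeta, ArithmeticFunction.one_apply] at h
  simp only [hdiv, Nat.coprime_iff_gcd_eq_one, h, ArithmeticFunction.intCoe_apply]

noncomputable def moebiusLogCoeff (Q k j : ℕ) : ℂ :=
  ∑ m ∈ Q.divisors, -(μ m / m : ℂ) * logCoeff (m * k) j

lemma moebiusLogCoeff_eq {Q k : ℕ} (hQ : Q ≠ 0) (hk : k ≠ 0) (j : ℕ) :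
    moebiusLogCoeff Q k j = if k ∣ j ∧ Nat.Coprime Q (j / k) then (k / j : ℂ) else 0 := by
  by_cases hkj : k ∣ j
  · obtain ⟨t, rfl⟩ := hkj
    have hterm : ∀ m ∈ Q.divisors, -(μ m / m : ℂ) * logCoeff (m * k) (k * t)
        = if m ∣ t then (μ m : ℂ) * (k / (k * t : ℕ)) else 0 := by
      intro m hm
      have hm0 : (m : ℂ) ≠ 0 := by exact_mod_cast (Nat.pos_of_mem_divisors hm).ne'
      simp only [logCoeff, mul_comm m k, Nat.mul_dvd_mul_iff_left (Nat.pos_of_ne_zero hk)]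
      split_ifs
      · push_cast; field_simp
      · simp
    rw [moebiusLogCoeff, sum_congr rfl hterm, ← sum_filter, ← sum_mul,
      sum_moebius_divisors_filter_dvd hQ, Nat.mul_div_cancel_left t (Nat.pos_of_ne_zero hk)]
    simp
  · rw [if_neg (fun h => hkj h.1), moebiusLogCoeff]
    refine sum_eq_zero fun m _ => ?_
    rw [logCoeff, if_neg (fun h => hkj ((dvd_mul_left k m).trans h)), mul_zero]

lemma norm_moebiusLogCoeff_le {Q k : ℕ} (hQ : Q ≠ 0) (hk : k ≠ 0) (j : ℕ) :
    ‖moebiusLogCoeff Q k j‖ ≤ k / j := by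
  rw [moebiusLogCoeff_eq hQ hk]
  split_ifs
  · simp
  · rw [norm_zero]; positivity

lemma eq_one_of_coprime_primorial {P t : ℕ} (h : Nat.Coprime (primorial P) t) (ht : t ≠ 0)
    (htP : t ≤ P) : t = 1 := by
  by_contra ht1
  have hp := Nat.minFac_prime ht1
  have hpP : t.minFac ∣ primorial P :=
    hp.dvd_primorial_iff.mpr ((Nat.minFac_le (Nat.pos_of_ne_zero ht)).trans htP)
  exact hp.ne_one (Nat.Coprime.eq_one_of_dvd (h.coprime_dvd_left hpP) (Nat.minFac_dvd t))

lemma moebiusLogCoeff_primorial_of_le {P k j : ℕ} (hk : k ≠ 0) (hjP : j ≤ P) :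
    moebiusLogCoeff (primorial P) k j = if j = k then 1 else 0 := by
  rw [moebiusLogCoeff_eq (primorial_ne_zero P) hk]
  split_ifs with h hjk hjk
  · subst hjk; simp [hk]
  · obtain ⟨⟨t, rfl⟩, hcop⟩ := h
    rw [Nat.mul_div_cancel_left t (Nat.pos_of_ne_zero hk)] at hcop
    rcases eq_or_ne t 0 with rfl | ht
    · simp
    · have := eq_one_of_coprime_primorial hcop ht ((Nat.le_mul_of_pos_left t
        (Nat.pos_of_ne_zero hk)).trans hjP)
      simp [this] at hjk
  · subst hjk; simp [Nat.div_self (Nat.pos_of_ne_zero hk)] at h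
  · rfl

noncomputable def moebiusApprox (a : ℕ → ℂ) (K P j : ℕ) : ℂ :=
  ∑ k ∈ Icc 1 K, a k * moebiusLogCoeff (primorial P) k j

lemma moebiusApprox_of_le (a : ℕ → ℂ) (K : ℕ) {P j : ℕ} (hjP : j ≤ P) :
    moebiusApprox a K P j = if j ∈ Icc 1 K then a j else 0 := by
  rw [moebiusApprox, sum_congr rfl fun k hk => by
    rw [moebiusLogCoeff_primorial_of_le (k := k) (by grind) hjP, mul_ite, mul_one, mul_zero]]
  exact sum_ite_eq _ _ _

lemma norm_moebiusApprox_le (a : ℕ → ℂ) (K P j : ℕ) :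
    ‖moebiusApprox a K P j‖ ≤ (∑ k ∈ Icc 1 K, k * ‖a k‖) / j := by
  rw [moebiusApprox, sum_div]
  refine (norm_sum_le _ _).trans (sum_le_sum fun k hk => ?_)
  calc ‖a k * moebiusLogCoeff (primorial P) k j‖
      = ‖a k‖ * ‖moebiusLogCoeff (primorial P) k j‖ := norm_mul _ _
    _ ≤ ‖a k‖ * (k / j) := by
      gcongr; exact norm_moebiusLogCoeff_le (primorial_ne_zero P) (by grind) j
    _ = k * ‖a k‖ / j := by ring

lemma hasSum_moebiusApprox (a : ℕ → ℂ) (K P : ℕ) {z : ℂ} (hz : ‖z‖ < 1) :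
    HasSum (fun j => moebiusApprox a K P j * z ^ j)
      (∑ k ∈ Icc 1 K, a k * ∑ m ∈ (primorial P).divisors,
        -(μ m / m : ℂ) * Complex.log (1 - z ^ (m * k))) := by
  simp only [moebiusApprox, moebiusLogCoeff, sum_mul, mul_assoc]
  refine hasSum_sum fun k hk => (hasSum_sum fun m hm => ?_).mul_left (a k)
  exact (hasSum_logCoeff (mul_ne_zero (Nat.pos_of_mem_divisors hm).ne' (by grind)) hz).mul_left _

lemma exists_hasSum_moebiusApprox (a : ℕ → ℂ) (K P : ℕ) :
    ∃ (N : ℕ) (c : ℕ → ℂ), ∀ z : ℂ, ‖z‖ < 1 → HasSum (fun j => moebiusApprox a K P j * z ^ j)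
      (∑ n ∈ Icc 1 N, c n * Complex.log (1 - z ^ n)) := by
  obtain ⟨c, hc⟩ := exists_sum_mul_eq_sum_mul_comp (s := Icc 1 K ×ˢ (primorial P).divisors)
    (t := Icc 1 (K * primorial P)) (fun i => a i.1 * -(μ i.2 / i.2 : ℂ)) (g := fun i => i.2 * i.1)
    fun ⟨k, m⟩ hkm => by
      obtain ⟨hk, hm⟩ := mem_product.mp hkm
      rw [mem_Icc] at hk ⊢
      exact ⟨Nat.mul_pos (Nat.pos_of_mem_divisors hm) hk.1,
        mul_comm m k ▸ Nat.mul_le_mul hk.2 (Nat.divisor_le hm)⟩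
  refine ⟨K * primorial P, c, fun z hz => ?_⟩
  rw [hc fun n => Complex.log (1 - z ^ n), sum_product]
  simp only [mul_assoc, ← mul_sum]
  exact hasSum_moebiusApprox a K P hz

lemma norm_sub_moebiusApprox_sq_le {a : ℕ → ℂ} (ha0 : a 0 = 0) {K P : ℕ} (hKP : K ≤ P)
    (j : ℕ) :
    ‖a j - moebiusApprox a K P j‖ ^ 2 ≤ 2 * (if K < j then ‖a j‖ ^ 2 else 0) +
      2 * (∑ k ∈ Icc 1 K, k * ‖a k‖) ^ 2 * (if P < j then 1 / (j : ℝ) ^ 2 else 0) := by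
  rcases le_or_gt j P with hjP | hPj
  · rw [moebiusApprox_of_le a K hjP, if_neg (not_lt.mpr hjP)]
    by_cases hjK : j ∈ Icc 1 K
    · rw [if_pos hjK, sub_self, norm_zero, if_neg (by grind)]
      simp
    · rw [if_neg hjK, sub_zero, mul_zero, add_zero]
      rcases eq_or_ne j 0 with rfl | hj0
      · simp [ha0]
      · rw [if_pos (by grind)]
        nlinarith [sq_nonneg ‖a j‖]
  · rw [if_pos (hKP.trans_lt hPj), if_pos hPj]
    set B := ∑ k ∈ Icc 1 K, k * ‖a k‖
    calc ‖a j - moebiusApprox a K P j‖ ^ 2 ≤ (‖a j‖ + B / j) ^ 2 := by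
          gcongr
          exact (norm_sub_le _ _).trans (by gcongr; exact norm_moebiusApprox_le a K P j)
      _ ≤ 2 * (‖a j‖ ^ 2 + (B / j) ^ 2) := add_sq_le
      _ = 2 * ‖a j‖ ^ 2 + 2 * B ^ 2 * (1 / (j : ℝ) ^ 2) := by ring

lemma tsum_norm_sub_moebiusApprox_sq_le {a : ℕ → ℂ} (ha0 : a 0 = 0)
    (ha : Summable fun j => ‖a j‖ ^ 2) {K P : ℕ} (hKP : K ≤ P) :
    ∑' j, ‖a j - moebiusApprox a K P j‖ ^ 2 ≤ 2 * ∑' j, (if K < j then ‖a j‖ ^ 2 else 0) +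
      2 * (∑ k ∈ Icc 1 K, k * ‖a k‖) ^ 2 * ∑' j, (if P < j then 1 / (j : ℝ) ^ 2 else 0) := by
  have htailK : Summable fun j => if K < j then ‖a j‖ ^ 2 else 0 :=
    ha.of_nonneg_of_le (fun j => by positivity) (fun j => by split_ifs <;> simp)
  have htailP : Summable fun j : ℕ => if P < j then 1 / (j : ℝ) ^ 2 else 0 :=
    (Real.summable_one_div_nat_pow.mpr one_lt_two).of_nonneg_of_le (fun j => by positivity)
      (fun j => by split_ifs <;> simp)
  have hbound := (htailK.mul_left 2).add (htailP.mul_left (2 * (∑ k ∈ Icc 1 K, k * ‖a k‖) ^ 2))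
  rw [← tsum_mul_left, ← tsum_mul_left, ← (htailK.mul_left 2).tsum_add (htailP.mul_left _)]
  have hpoint := norm_sub_moebiusApprox_sq_le ha0 hKP
  exact (hbound.of_nonneg_of_le (fun j => by positivity) hpoint).tsum_le_tsum hpoint hbound

/-- L(z) = log(1-z) is cyclic for {T_n} on H²₀ = {f ∈ H² : f(0) = 0}:
    the span of {log(1-z^n) : n ≥ 1} is dense in H²₀ (with the H² norm computed via
    Maclaurin coefficients iteratedDeriv j · 0 / j!). -/
theorem stmt19 (f : ℂ → ℂ) (hf : DifferentiableOn ℂ f (Metric.ball (0 : ℂ) 1))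
    (hf0 : f 0 = 0)
    (hf2 : Summable fun j : ℕ => ‖iteratedDeriv j f 0 / (j.factorial : ℂ)‖ ^ 2)
    (ε : ℝ) (hε : 0 < ε) :
    ∃ (N : ℕ) (c : ℕ → ℂ),
      ∑' j : ℕ, ‖iteratedDeriv j
          (fun z : ℂ => f z - ∑ n ∈ Finset.Icc 1 N, c n * Complex.log (1 - z ^ n)) 0
        / (j.factorial : ℂ)‖ ^ 2 < ε ^ 2 := by
  set a : ℕ → ℂ := fun j => iteratedDeriv j f 0 / j.factorial with ha
  have ha0 : a 0 = 0 := by simp [a, hf0]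
  have hfa : ∀ z : ℂ, ‖z‖ < 1 → HasSum (fun j => a j * z ^ j) (f z) := fun z hz =>
    (Complex.hasSum_taylorSeries_on_ball hf (mem_ball_zero_iff.mpr hz)).congr_fun fun j => by
      simp only [ha, smul_eq_mul, sub_zero]
      ring
  obtain ⟨K, hK⟩ := ((tendsto_tsum_ite_lt_atTop_zero fun j => ‖a j‖ ^ 2).eventually
    (gt_mem_nhds (by positivity : 0 < ε ^ 2 / 4))).exists
  set B := ∑ k ∈ Icc 1 K, k * ‖a k‖
  obtain ⟨P, hP, hKP⟩ := (((tendsto_tsum_ite_lt_atTop_zero fun j : ℕ => 1 / (j : ℝ) ^ 2)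
    |>.eventually (gt_mem_nhds (by positivity : 0 < ε ^ 2 / (4 * (B ^ 2 + 1))))).and
    (eventually_ge_atTop K)).exists
  obtain ⟨N, c, hc⟩ := exists_hasSum_moebiusApprox a K P
  refine ⟨N, c, ?_⟩
  have hcoeff (j : ℕ) : iteratedDeriv j (fun z : ℂ =>
      f z - ∑ n ∈ Icc 1 N, c n * Complex.log (1 - z ^ n)) 0 / j.factorial =
      a j - moebiusApprox a K P j :=
    iteratedDeriv_div_factorial_eq_of_hasSum (B := fun j => a j - moebiusApprox a K P j) one_pos
      (fun z hz => by simpa only [sub_mul] using (hfa z hz).sub (hc z hz)) j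
  simp only [hcoeff]
  have hPnonneg : 0 ≤ ∑' j : ℕ, (if P < j then 1 / (j : ℝ) ^ 2 else 0) :=
    tsum_nonneg fun j => by positivity
  have hP' := (lt_div_iff₀ (by positivity)).mp hP
  calc _ ≤ _ := tsum_norm_sub_moebiusApprox_sq_le ha0 hf2 hKP
    _ < ε ^ 2 := by nlinarith [sq_nonneg B]
end
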